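/- arXiv:1609.01627 — 3 statements merged into one kernel-verified Lean document; each statement's English description precedes it below -/
import Mathlib

section
/- Under the hypotheses of the modified Krasnosel'skii–Mann theorem (T nonexpansive, 0 < β_n ≤ 1 with β_n → 1 and ∑|β_n - β_{n-1}| < ∞, 0 < λ_n ≤ 1 with ∑|λ_n - λ_{n-1}| < ∞ and ∑(1-β_n) = ∞), the consecutive differences satisfy ‖x_{n+1} - x_n‖ → 0 as n → +∞. -/
/-!
The sequence `a n = ‖x (n+1) - x n‖` obeys `a (n+1) ≤ β (n+1) * a n + c n` with a summable
error `c n` proportional to `|β (n+1) - β n| + |lam (n+1) - lam n|`: the KM step is nonexpansive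
in the point and Lipschitz in the relaxation parameter, and all iterates stay in the closed ball
around a fixed point `z` of radius `max ‖x 0 - z‖ ‖z‖`. Since `∑ (1 - β n) = ∞`, the products
`∏ β k` vanish and the recursion forces `a n → 0`.
-/

open Filter Topology Finset Metric

section RecursiveInequality

theorem prod_one_sub_le_exp_neg_sum {ι : Type*} (s : Finset ι) {γ : ι → ℝ}
    (hγ : ∀ k ∈ s, γ k ≤ 1) : ∏ k ∈ s, (1 - γ k) ≤ Real.exp (-∑ k ∈ s, γ k) := by
  rw [← sum_neg_distrib, Real.exp_sum]
  exact prod_le_prod (fun k hk => sub_nonneg.2 (hγ k hk))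
    fun k _ => by linarith [Real.add_one_le_exp (-γ k)]

variable {a γ c : ℕ → ℝ}

theorem tendsto_prod_Ico_one_sub_atTop_zero (hγ0 : ∀ n, 0 ≤ γ n) (hγ1 : ∀ n, γ n ≤ 1)
    (hγ : ¬ Summable γ) (N : ℕ) :
    Tendsto (fun n => ∏ k ∈ Ico N n, (1 - γ k)) atTop (𝓝 0) := by
  have hsum : Tendsto (fun n => ∑ k ∈ Ico N n, γ k) atTop atTop := by
    refine (tendsto_atTop_add_const_right _ (-∑ k ∈ range N, γ k)
      ((not_summable_iff_tendsto_nat_atTop_of_nonneg hγ0).1 hγ)).congr' ?_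
    filter_upwards [eventually_ge_atTop N] with n hn
    rw [sum_Ico_eq_sub _ hn, sub_eq_add_neg]
  exact squeeze_zero (fun n => prod_nonneg fun k _ => sub_nonneg.2 (hγ1 k))
    (fun n => prod_one_sub_le_exp_neg_sum _ fun k _ => hγ1 k)
    (Real.tendsto_exp_neg_atTop_nhds_zero.comp hsum)

theorem le_prod_mul_add_sum_of_le_one_sub_mul_add (hγ0 : ∀ n, 0 ≤ γ n) (hγ1 : ∀ n, γ n ≤ 1)
    (hc0 : ∀ n, 0 ≤ c n) (hrec : ∀ n, a (n + 1) ≤ (1 - γ n) * a n + c n) {N n : ℕ}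
    (hNn : N ≤ n) : a n ≤ (∏ k ∈ Ico N n, (1 - γ k)) * a N + ∑ k ∈ Ico N n, c k := by
  induction n, hNn using Nat.le_induction with
  | base => simp
  | succ n hNn ih =>
    rw [prod_Ico_succ_top hNn, sum_Ico_succ_top hNn]
    have hsum : 0 ≤ ∑ k ∈ Ico N n, c k := sum_nonneg fun k _ => hc0 k
    have hγn : 0 ≤ 1 - γ n := sub_nonneg.2 (hγ1 n)
    calc a (n + 1) ≤ (1 - γ n) * a n + c n := hrec n
      _ ≤ (1 - γ n) * ((∏ k ∈ Ico N n, (1 - γ k)) * a N + ∑ k ∈ Ico N n, c k) + c n := by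
        gcongr
      _ ≤ _ := by nlinarith [hγ0 n]

theorem sum_Ico_le_tsum_nat_add (hc0 : ∀ n, 0 ≤ c n) (hc : Summable c) (N n : ℕ) :
    ∑ k ∈ Ico N n, c k ≤ ∑' k, c (k + N) := by
  rw [sum_Ico_eq_sum_range]
  simp_rw [add_comm N]
  exact ((summable_nat_add_iff N).2 hc).sum_le_tsum _ fun k _ => hc0 _

/-- A discrete Gronwall-type lemma in the form of H.-K. Xu. -/
theorem tendsto_zero_of_le_one_sub_mul_add (ha : ∀ n, 0 ≤ a n) (hγ0 : ∀ n, 0 ≤ γ n)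
    (hγ1 : ∀ n, γ n ≤ 1) (hγ : ¬ Summable γ) (hc0 : ∀ n, 0 ≤ c n) (hc : Summable c)
    (hrec : ∀ n, a (n + 1) ≤ (1 - γ n) * a n + c n) : Tendsto a atTop (𝓝 0) := by
  refine tendsto_order.2 ⟨fun ε hε => Eventually.of_forall fun n => hε.trans_le (ha n),
    fun ε hε => ?_⟩
  obtain ⟨N, hN⟩ := ((tendsto_sum_nat_add c).eventually (gt_mem_nhds (half_pos hε))).exists
  have hprod := (tendsto_prod_Ico_one_sub_atTop_zero hγ0 hγ1 hγ N).mul_const (a N)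
  rw [zero_mul] at hprod
  filter_upwards [eventually_ge_atTop N, hprod.eventually (gt_mem_nhds (half_pos hε))]
    with n hNn hn
  calc a n ≤ (∏ k ∈ Ico N n, (1 - γ k)) * a N + ∑ k ∈ Ico N n, c k :=
        le_prod_mul_add_sum_of_le_one_sub_mul_add hγ0 hγ1 hc0 hrec hNn
    _ < ε / 2 + ε / 2 :=
      add_lt_add_of_lt_of_le hn ((sum_Ico_le_tsum_nat_add hc0 hc N n).trans hN.le)
    _ = ε := add_halves ε

end RecursiveInequality

section Nonexpansive

variable {E : Type*} [SeminormedAddCommGroup E] {T : E → E}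

theorem apply_mem_closedBall_of_nonexpansive (hT : ∀ x y, ‖T x - T y‖ ≤ ‖x - y‖) {y z : E}
    (hz : T z = z) {M : ℝ} (hy : y ∈ closedBall z M) : T y ∈ closedBall z M := by
  rw [mem_closedBall_iff_norm] at hy ⊢
  simpa only [hz] using (hT y z).trans hy

variable [NormedSpace ℝ E]

theorem smul_mem_closedBall_of_norm_le {x z : E} {M t : ℝ} (hx : x ∈ closedBall z M)
    (hz : ‖z‖ ≤ M) (ht : t ∈ Set.Icc 0 1) : t • x ∈ closedBall z M := by
  have h0 : (0 : E) ∈ closedBall z M := by rwa [mem_closedBall, dist_zero_left]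
  simpa using convex_closedBall z M hx h0 ht.1 (sub_nonneg.2 ht.2) (add_sub_cancel t 1)

theorem add_smul_sub_mem_closedBall_of_nonexpansive (hT : ∀ x y, ‖T x - T y‖ ≤ ‖x - y‖)
    {y z : E} (hz : T z = z) {M t : ℝ} (hy : y ∈ closedBall z M) (ht : t ∈ Set.Icc 0 1) :
    y + t • (T y - y) ∈ closedBall z M := by
  convert convex_closedBall z M hy (apply_mem_closedBall_of_nonexpansive hT hz hy)
    (sub_nonneg.2 ht.2) ht.1 (sub_add_cancel 1 t) using 1
  module

theorem norm_smul_sub_smul_le (a b : ℝ) (u v : E) (hb : 0 ≤ b) :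
    ‖b • v - a • u‖ ≤ b * ‖v - u‖ + |b - a| * ‖u‖ := by
  calc ‖b • v - a • u‖ = ‖b • (v - u) + (b - a) • u‖ := by congr 1; module
    _ ≤ ‖b • (v - u)‖ + ‖(b - a) • u‖ := norm_add_le _ _
    _ = _ := by rw [norm_smul_of_nonneg hb, norm_smul, Real.norm_eq_abs]

theorem norm_add_smul_sub_sub_le_of_nonexpansive (hT : ∀ x y, ‖T x - T y‖ ≤ ‖x - y‖)
    {s t : ℝ} (ht : t ∈ Set.Icc 0 1) (u v : E) :
    ‖(v + t • (T v - v)) - (u + s • (T u - u))‖ ≤ ‖v - u‖ + |t - s| * ‖T u - u‖ := by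
  calc _ = ‖(1 - t) • (v - u) + t • (T v - T u) + (t - s) • (T u - u)‖ := by congr 1; module
    _ ≤ (1 - t) * ‖v - u‖ + t * ‖T v - T u‖ + |t - s| * ‖T u - u‖ := by
      refine (norm_add₃_le ..).trans_eq ?_
      rw [norm_smul_of_nonneg (sub_nonneg.2 ht.2), norm_smul_of_nonneg ht.1, norm_smul,
        Real.norm_eq_abs]
    _ ≤ (1 - t) * ‖v - u‖ + t * ‖v - u‖ + |t - s| * ‖T u - u‖ := by
      gcongr
      exacts [ht.1, hT v u]
    _ = _ := by ring

variable {β lam : ℕ → ℝ} {x : ℕ → E}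

theorem modKM_mem_closedBall (hT : ∀ x y, ‖T x - T y‖ ≤ ‖x - y‖) {z : E} (hz : T z = z)
    (hβ : ∀ n, β n ∈ Set.Icc 0 1) (hlam : ∀ n, lam n ∈ Set.Icc 0 1)
    (hiter : ∀ n, x (n + 1) = β n • x n + lam n • (T (β n • x n) - β n • x n)) (n : ℕ) :
    x n ∈ closedBall z (max ‖x 0 - z‖ ‖z‖) := by
  induction n with
  | zero => exact mem_closedBall_iff_norm.2 (le_max_left _ _)
  | succ n ih =>
    rw [hiter n]
    exact add_smul_sub_mem_closedBall_of_nonexpansive hT hz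
      (smul_mem_closedBall_of_norm_le ih (le_max_right _ _) (hβ n)) (hlam n)

theorem modKM_norm_sub_le (hT : ∀ x y, ‖T x - T y‖ ≤ ‖x - y‖) (hβ0 : ∀ n, 0 ≤ β n)
    (hlam : ∀ n, lam n ∈ Set.Icc 0 1)
    (hiter : ∀ n, x (n + 1) = β n • x n + lam n • (T (β n • x n) - β n • x n)) {C : ℝ}
    (hx : ∀ n, ‖x n‖ ≤ C) (hTx : ∀ n, ‖T (β n • x n) - β n • x n‖ ≤ C) (n : ℕ) :
    ‖x (n + 2) - x (n + 1)‖ ≤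
      β (n + 1) * ‖x (n + 1) - x n‖ + C * (|β (n + 1) - β n| + |lam (n + 1) - lam n|) := by
  have hstep := norm_add_smul_sub_sub_le_of_nonexpansive hT (s := lam n) (hlam (n + 1)) (β n • x n)
    (β (n + 1) • x (n + 1))
  rw [← hiter n, ← hiter (n + 1)] at hstep
  have hy := norm_smul_sub_smul_le (β n) (β (n + 1)) (x n) (x (n + 1)) (hβ0 (n + 1))
  calc ‖x (n + 2) - x (n + 1)‖
      ≤ ‖β (n + 1) • x (n + 1) - β n • x n‖
        + |lam (n + 1) - lam n| * ‖T (β n • x n) - β n • x n‖ := hstep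
    _ ≤ β (n + 1) * ‖x (n + 1) - x n‖ + |β (n + 1) - β n| * C + |lam (n + 1) - lam n| * C := by
      gcongr
      exacts [hy.trans (by gcongr; exact hx n), hTx n]
    _ = _ := by ring

end Nonexpansive

theorem modKM_diff_to_zero_general
    {H : Type*} [NormedAddCommGroup H] [InnerProductSpace ℝ H]
    (T : H → H) (hT : ∀ x y : H, ‖T x - T y‖ ≤ ‖x - y‖)
    (hfix_ne : {z : H | T z = z}.Nonempty)
    (β lam : ℕ → ℝ)
    (hβ : ∀ n, 0 < β n ∧ β n ≤ 1)
    (hβdiv : ¬ Summable (fun n => 1 - β n))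
    (hβvar : Summable (fun n => |β (n + 1) - β n|))
    (hlam : ∀ n, 0 < lam n ∧ lam n ≤ 1)
    (hlamvar : Summable (fun n => |lam (n + 1) - lam n|))
    (x : ℕ → H)
    (hiter : ∀ n, x (n + 1) = β n • x n + lam n • (T (β n • x n) - β n • x n)) :
    Tendsto (fun n => ‖x (n + 1) - x n‖) atTop (nhds 0) := by
  obtain ⟨z, hz : T z = z⟩ := hfix_ne
  set M := max ‖x 0 - z‖ ‖z‖
  have hM : 0 ≤ M := (norm_nonneg _).trans (le_max_right _ _)
  have hβ' (n : ℕ) : β n ∈ Set.Icc 0 1 := ⟨(hβ n).1.le, (hβ n).2⟩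
  have hlam' (n : ℕ) : lam n ∈ Set.Icc 0 1 := ⟨(hlam n).1.le, (hlam n).2⟩
  have hx := modKM_mem_closedBall hT hz hβ' hlam' hiter
  have hy (n : ℕ) := smul_mem_closedBall_of_norm_le (hx n) (le_max_right _ _) (hβ' n)
  have h0 : (0 : H) ∈ closedBall z M := by
    rw [mem_closedBall, dist_zero_left]; exact le_max_right _ _
  have hdiam {u v : H} (hu : u ∈ closedBall z M) (hv : v ∈ closedBall z M) :
      ‖u - v‖ ≤ 2 * M := by
    rw [← dist_eq_norm]
    exact (dist_le_diam_of_mem isBounded_closedBall hu hv).trans (diam_closedBall hM)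
  refine tendsto_zero_of_le_one_sub_mul_add (γ := fun n => 1 - β (n + 1))
    (c := fun n => 2 * M * (|β (n + 1) - β n| + |lam (n + 1) - lam n|)) (fun n => norm_nonneg _)
    (fun n => sub_nonneg.2 (hβ (n + 1)).2) (fun n => by linarith [(hβ (n + 1)).1])
    (fun h => hβdiv ((summable_nat_add_iff 1).1 h)) (fun n => by positivity)
    ((hβvar.add hlamvar).mul_left _) fun n => ?_
  simpa only [sub_sub_cancel] using modKM_norm_sub_le hT (fun n => (hβ' n).1) hlam' hiter
    (fun n => by simpa using hdiam (hx n) h0)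
    (fun n => hdiam (apply_mem_closedBall_of_nonexpansive hT hz (hy n)) (hy n)) n

/-- In the modified Krasnosel'skii–Mann algorithm, the consecutive differences
satisfy `‖x (n+1) - x n‖ → 0`. -/
theorem modKM_diff_to_zero
    {H : Type*} [NormedAddCommGroup H] [InnerProductSpace ℝ H] [CompleteSpace H]
    (T : H → H) (hT : ∀ x y : H, ‖T x - T y‖ ≤ ‖x - y‖)
    (hfix_ne : {z : H | T z = z}.Nonempty)
    (β lam : ℕ → ℝ)
    (hβ : ∀ n, 0 < β n ∧ β n ≤ 1)
    (hβlim : Tendsto β atTop (nhds 1))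
    (hβdiv : ¬ Summable (fun n => 1 - β n))
    (hβvar : Summable (fun n => |β (n + 1) - β n|))
    (hlam : ∀ n, 0 < lam n ∧ lam n ≤ 1)
    (hlamvar : Summable (fun n => |lam (n + 1) - lam n|))
    (x : ℕ → H)
    (hiter : ∀ n, x (n + 1) = β n • x n + lam n • (T (β n • x n) - β n • x n)) :
    Tendsto (fun n => ‖x (n + 1) - x n‖) atTop (nhds 0) :=
  modKM_diff_to_zero_general T hT hfix_ne β lam hβ hβdiv hβvar hlam hlamvar x hiter
end

section
/- Let R : H → H be α-averaged for some α ∈ (0,1) with Fix R ≠ ∅. If (β_n) satisfies 0 < β_n ≤ 1, β_n → 1, ∑(1-β_n) = +∞, ∑|β_n - β_{n-1}| < +∞, and (λ_n) satisfies 0 < λ_n ≤ 1/α, liminf λ_n > 0, ∑|λ_n - λ_{n-1}| < +∞, then the sequence x_{n+1} = β_n x_n + λ_n(R(β_n x_n) - β_n x_n) converges strongly to the projection of 0 onto Fix R. -/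
open Filter Topology

/-- `R` is `α`-averaged if `R = (1-α) Id + α T` for some nonexpansive `T`. -/
def IsAveraged {H : Type*} [NormedAddCommGroup H] [InnerProductSpace ℝ H]
    (α : ℝ) (R : H → H) : Prop :=
  ∃ T : H → H, (∀ x y : H, ‖T x - T y‖ ≤ ‖x - y‖) ∧
    ∀ x : H, R x = (1 - α) • x + α • T x

open RealInnerProductSpace Function

/-!
Writing `R = (1 - α) Id + α T`, the iteration becomes `x (n+1) = y n + α λ n (T y n - y n)` with
`y n = β n x n`: a relaxed step of the nonexpansive map `T`, whose fixed points are those of `R`.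
The iterates are bounded, and Xu's lemma on recursions `s (n+1) ≤ (1 - γ n) s n + γ n δ n + ε n`,
applied to `‖x (n+1) - x n‖` with the variations of `β` and `λ` as `ε`, gives asymptotic
regularity, hence `‖T x n - x n‖ → 0`. By demiclosedness every weak cluster point of `x` is a fixed
point, and the minimal norm fixed point `p` satisfies `⟪p, p - z⟫ ≤ 0` on the convex set `Fix T`;
so `limsup ⟪p, p - x n⟫ ≤ 0`, and Xu's lemma applied to `‖x n - p‖²` with `γ n = 1 - β n` concludes.
-/

theorem tendsto_zero_of_le_one_sub_mul {v γ : ℕ → ℝ} (hv : ∀ n, 0 ≤ v n)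
    (hγ : ∀ n, 0 ≤ γ n) (hγdiv : ¬ Summable γ) (hrec : ∀ n, v (n + 1) ≤ (1 - γ n) * v n) :
    Tendsto v atTop (𝓝 0) := by
  have hbound : ∀ n, v n ≤ Real.exp (-∑ k ∈ Finset.range n, γ k) * v 0 := by
    intro n
    induction n with
    | zero => simp
    | succ n ih =>
      calc v (n + 1) ≤ (1 - γ n) * v n := hrec n
        _ ≤ Real.exp (-γ n) * v n := by
          gcongr
          · exact hv n
          · linarith [Real.add_one_le_exp (-γ n)]
        _ ≤ Real.exp (-γ n) * (Real.exp (-∑ k ∈ Finset.range n, γ k) * v 0) := by gcongr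
        _ = Real.exp (-∑ k ∈ Finset.range (n + 1), γ k) * v 0 := by
          rw [← mul_assoc, ← Real.exp_add, Finset.sum_range_succ]; ring_nf
  have hsum := (not_summable_iff_tendsto_nat_atTop_of_nonneg hγ).1 hγdiv
  have hexp : Tendsto (fun n => Real.exp (-∑ k ∈ Finset.range n, γ k) * v 0) atTop (𝓝 0) := by
    simpa using (Real.tendsto_exp_neg_atTop_nhds_zero.comp hsum).mul_const (v 0)
  exact squeeze_zero hv hbound hexp

theorem tendsto_zero_of_le_one_sub_mul_add_mul_add {s γ δ ε : ℕ → ℝ} (hs : ∀ n, 0 ≤ s n)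
    (hγ0 : ∀ n, 0 ≤ γ n) (hγ1 : ∀ n, γ n ≤ 1) (hγdiv : ¬ Summable γ)
    (hδ : ∀ η > 0, ∀ᶠ n in atTop, δ n ≤ η) (hε0 : ∀ n, 0 ≤ ε n) (hε : Summable ε)
    (hrec : ∀ n, s (n + 1) ≤ (1 - γ n) * s n + γ n * δ n + ε n) :
    Tendsto s atTop (𝓝 0) := by
  refine tendsto_order.2 ⟨fun b hb => .of_forall fun n => hb.trans_le (hs n), fun b hb => ?_⟩
  set η := b / 3
  -- with `E n` the tail of `∑ ε`, `s n + E n - 2η` contracts by `1 - γ n` once `δ n, E n ≤ η`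
  set E : ℕ → ℝ := fun n => ∑' k, ε (k + n)
  have hE0 : ∀ n, 0 ≤ E n := fun n => tsum_nonneg fun k => hε0 _
  have hEsucc : ∀ n, E n = ε n + E (n + 1) := fun n => by
    simp only [E, ((summable_nat_add_iff n).2 hε).tsum_eq_zero_add, zero_add, add_assoc, add_comm 1 n]
  obtain ⟨N, hN⟩ := eventually_atTop.1 ((hδ η (by positivity)).and
    ((tendsto_sum_nat_add ε).eventually (ge_mem_nhds (by positivity : (0 : ℝ) < η))))
  have hstep : ∀ n ≥ N, s (n + 1) + E (n + 1) - 2 * η ≤ (1 - γ n) * (s n + E n - 2 * η) := by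
    intro n hn
    obtain ⟨hδn, hEn⟩ := hN n hn
    linarith [hrec n, hEsucc n, mul_le_mul_of_nonneg_left hδn (hγ0 n),
      mul_le_mul_of_nonneg_left hEn (hγ0 n)]
  set v : ℕ → ℝ := fun m => max (s (m + N) + E (m + N) - 2 * η) 0
  have hv : Tendsto v atTop (𝓝 0) := by
    refine tendsto_zero_of_le_one_sub_mul (γ := fun m => γ (m + N)) (fun m => le_max_right _ _)
      (fun m => hγ0 _) (fun h => hγdiv ((summable_nat_add_iff N).1 h)) fun m => ?_
    have h1γ : 0 ≤ 1 - γ (m + N) := sub_nonneg.2 (hγ1 _)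
    refine max_le ?_ (mul_nonneg h1γ (le_max_right _ _))
    rw [show m + 1 + N = m + N + 1 by omega]
    exact (hstep (m + N) (by omega)).trans (mul_le_mul_of_nonneg_left (le_max_left _ _) h1γ)
  obtain ⟨M, hM⟩ := eventually_atTop.1 (hv.eventually (gt_mem_nhds (by positivity : (0 : ℝ) < η)))
  filter_upwards [eventually_ge_atTop (M + N)] with n hn
  have hvn := (le_max_left _ _).trans_lt (hM (n - N) (by omega))
  rw [Nat.sub_add_cancel (by omega)] at hvn
  linarith [hE0 n, show η * 3 = b by ring]

theorem norm_sub_le_of_isFixedPt {E : Type*} [SeminormedAddGroup E] {T : E → E}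
    (hT : ∀ u v, ‖T u - T v‖ ≤ ‖u - v‖) {p : E} (hp : T p = p) (u : E) : ‖T u - p‖ ≤ ‖u - p‖ := by
  simpa only [hp] using hT u p

theorem norm_smul_sub_le {E : Type*} [NormedAddCommGroup E] [NormedSpace ℝ E] {b : ℝ} (hb0 : 0 ≤ b)
    (hb1 : b ≤ 1) (u p : E) : ‖b • u - p‖ ≤ b * ‖u - p‖ + (1 - b) * ‖p‖ := by
  calc ‖b • u - p‖ = ‖b • (u - p) - (1 - b) • p‖ := by congr 1; module
    _ ≤ ‖b • (u - p)‖ + ‖(1 - b) • p‖ := norm_sub_le _ _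
    _ = b * ‖u - p‖ + (1 - b) * ‖p‖ := by
      rw [norm_smul, norm_smul, Real.norm_of_nonneg hb0, Real.norm_of_nonneg (sub_nonneg.2 hb1)]

theorem norm_relax_sub_relax_le {E : Type*} [NormedAddCommGroup E] [NormedSpace ℝ E] {T : E → E}
    (hT : ∀ u v, ‖T u - T v‖ ≤ ‖u - v‖) {a : ℝ} (ha0 : 0 ≤ a) (ha1 : a ≤ 1) (u v : E) :
    ‖u + a • (T u - u) - (v + a • (T v - v))‖ ≤ ‖u - v‖ := by
  calc ‖u + a • (T u - u) - (v + a • (T v - v))‖ = ‖(1 - a) • (u - v) + a • (T u - T v)‖ := by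
        congr 1; module
    _ ≤ (1 - a) * ‖u - v‖ + a * ‖T u - T v‖ := by
      refine (norm_add_le _ _).trans_eq ?_
      rw [norm_smul, norm_smul, Real.norm_of_nonneg ha0, Real.norm_of_nonneg (sub_nonneg.2 ha1)]
    _ ≤ (1 - a) * ‖u - v‖ + a * ‖u - v‖ := by gcongr; exact hT u v
    _ = ‖u - v‖ := by ring

section Hilbert

variable {H : Type*} [NormedAddCommGroup H] [InnerProductSpace ℝ H] {T : H → H}

theorem norm_sub_smul_add_smul_sq (v z w : H) {a b : ℝ} (hab : a + b = 1) :
    ‖v - (a • z + b • w)‖ ^ 2 = a * ‖v - z‖ ^ 2 + b * ‖v - w‖ ^ 2 - a * b * ‖z - w‖ ^ 2 := by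
  obtain rfl : a = 1 - b := by linarith
  have h1 : v - ((1 - b) • z + b • w) = (1 - b) • (v - z) + b • (v - w) := by module
  have h2 : z - w = (v - w) - (v - z) := by abel
  rw [h1, h2]
  generalize v - z = X
  generalize v - w = Y
  rw [norm_add_sq_real, norm_sub_sq_real, norm_smul, norm_smul, real_inner_smul_left,
    real_inner_smul_right, real_inner_comm X, Real.norm_eq_abs, Real.norm_eq_abs, mul_pow,
    mul_pow, sq_abs, sq_abs]
  ring

theorem convex_fixedPoints (hT : ∀ u v, ‖T u - T v‖ ≤ ‖u - v‖) : Convex ℝ (fixedPoints T) := by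
  intro z (hz : T z = z) w (hw : T w = w) a b ha hb hab
  obtain rfl : a = 1 - b := by linarith
  set m := (1 - b) • z + b • w
  have hmz : ‖T m - z‖ ^ 2 ≤ b ^ 2 * ‖z - w‖ ^ 2 := by
    have : ‖m - z‖ = b * ‖z - w‖ := by
      rw [show m - z = b • (w - z) by module, norm_smul, Real.norm_of_nonneg hb, norm_sub_rev]
    rw [← mul_pow, ← this]
    exact pow_le_pow_left₀ (norm_nonneg _) (norm_sub_le_of_isFixedPt hT hz m) 2
  have hmw : ‖T m - w‖ ^ 2 ≤ (1 - b) ^ 2 * ‖z - w‖ ^ 2 := by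
    have : ‖m - w‖ = (1 - b) * ‖z - w‖ := by
      rw [show m - w = (1 - b) • (z - w) by module, norm_smul, Real.norm_of_nonneg ha]
    rw [← mul_pow, ← this]
    exact pow_le_pow_left₀ (norm_nonneg _) (norm_sub_le_of_isFixedPt hT hw m) 2
  have : ‖T m - m‖ ^ 2 ≤ 0 := by
    rw [norm_sub_smul_add_smul_sq _ _ _ (sub_add_cancel 1 b)]
    nlinarith [mul_le_mul_of_nonneg_left hmz ha, mul_le_mul_of_nonneg_left hmw hb]
  exact norm_sub_eq_zero_iff.1 ((sq_nonpos_iff _).1 this)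

theorem inner_sub_nonpos_of_isMinNormFixedPt (hT : ∀ u v, ‖T u - T v‖ ≤ ‖u - v‖) {p : H}
    (hp : T p = p) (hmin : ∀ q, T q = q → ‖p‖ ≤ ‖q‖) {z : H} (hz : T z = z) :
    ⟪p, p - z⟫ ≤ 0 := by
  have : Nonempty (fixedPoints T) := ⟨⟨p, hp⟩⟩
  have hinf : ‖0 - p‖ = ⨅ w : fixedPoints T, ‖0 - (w : H)‖ := by
    refine le_antisymm (le_ciInf fun w => by simpa using hmin w w.2) ?_
    exact ciInf_le ⟨0, Set.forall_mem_range.2 fun _ => norm_nonneg _⟩ (⟨p, hp⟩ : fixedPoints T)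
  have := (norm_eq_iInf_iff_real_inner_le_zero (convex_fixedPoints hT) hp).1 hinf z hz
  rwa [zero_sub, inner_neg_left, neg_le, neg_zero, ← neg_sub, inner_neg_right, neg_nonneg] at this

theorem isFixedPt_of_tendsto_inner (hT : ∀ u v, ‖T u - T v‖ ≤ ‖u - v‖) {ι : Type*}
    {l : Filter ι} [l.NeBot] {u : ι → H} {M : ℝ} (hu : ∀ i, ‖u i‖ ≤ M) {z : H}
    (hweak : ∀ y, Tendsto (fun i => ⟪u i, y⟫) l (𝓝 ⟪z, y⟫))
    (hreg : Tendsto (fun i => ‖T (u i) - u i‖) l (𝓝 0)) : T z = z := by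
  set r := fun i => ‖T (u i) - u i‖
  have hle : ∀ i, ‖z - T z‖ ^ 2 + 2 * ⟪u i - z, z - T z⟫ ≤ r i ^ 2 + 2 * r i * (M + ‖z‖) := by
    intro i
    have hexp : ‖u i - T z‖ ^ 2 = ‖u i - z‖ ^ 2 + ‖z - T z‖ ^ 2 + 2 * ⟪u i - z, z - T z⟫ := by
      rw [← sub_add_sub_cancel (u i) z (T z), norm_add_sq_real]; ring
    have h1 : ‖u i - T z‖ ≤ r i + ‖u i - z‖ := by
      calc ‖u i - T z‖ ≤ ‖u i - T (u i)‖ + ‖T (u i) - T z‖ := norm_sub_le_norm_sub_add_norm_sub _ _ _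
        _ ≤ r i + ‖u i - z‖ := by rw [norm_sub_rev]; exact add_le_add_right (hT _ _) _
    have h2 : ‖u i - z‖ ≤ M + ‖z‖ := (norm_sub_le _ _).trans (add_le_add_left (hu i) _)
    have hr : 0 ≤ r i := norm_nonneg _
    nlinarith [norm_nonneg (u i - T z), norm_nonneg (u i - z)]
  have hlim_left : Tendsto (fun i => ‖z - T z‖ ^ 2 + 2 * ⟪u i - z, z - T z⟫) l
      (𝓝 (‖z - T z‖ ^ 2)) := by
    have : Tendsto (fun i => ⟪u i - z, z - T z⟫) l (𝓝 0) := by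
      simpa [inner_sub_left] using (hweak (z - T z)).sub_const ⟪z, z - T z⟫
    simpa using (this.const_mul 2).const_add (‖z - T z‖ ^ 2)
  have hlim_right : Tendsto (fun i => r i ^ 2 + 2 * r i * (M + ‖z‖)) l (𝓝 0) := by
    simpa using (hreg.pow 2).add ((hreg.const_mul 2).mul_const (M + ‖z‖))
  have : ‖z - T z‖ ^ 2 ≤ 0 := le_of_tendsto_of_tendsto' hlim_left hlim_right hle
  exact (norm_sub_eq_zero_iff.1 ((sq_nonpos_iff _).1 this)).symm

theorem exists_tendsto_inner_of_norm_le [CompleteSpace H] {ι : Type*} (U : Ultrafilter ι)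
    {u : ι → H} {M : ℝ} (hu : ∀ i, ‖u i‖ ≤ M) :
    ∃ z : H, ∀ y, Tendsto (fun i => ⟪u i, y⟫) U (𝓝 ⟪z, y⟫) := by
  let f : ι → WeakDual ℝ H := fun i => StrongDual.toWeakDual (InnerProductSpace.toDual ℝ H (u i))
  obtain ⟨φ, -, hφ⟩ := (WeakDual.isCompact_closedBall 0 M).ultrafilter_le_nhds (U.map f)
    (le_principal_iff.2 <| Filter.mem_map.2 <| univ_mem' fun i => by simpa [f] using hu i)
  refine ⟨(InnerProductSpace.toDual ℝ H).symm (WeakDual.toStrongDual φ), fun y => ?_⟩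
  rw [InnerProductSpace.toDual_symm_apply]
  exact tendsto_iff_forall_eval_tendsto_topDualPairing.1 hφ y

theorem eventually_inner_sub_lt [CompleteSpace H] (hT : ∀ u v, ‖T u - T v‖ ≤ ‖u - v‖) {p : H}
    (hp : T p = p) (hmin : ∀ q, T q = q → ‖p‖ ≤ ‖q‖) {u : ℕ → H} {M : ℝ} (hu : ∀ n, ‖u n‖ ≤ M)
    (hreg : Tendsto (fun n => ‖T (u n) - u n‖) atTop (𝓝 0)) {η : ℝ} (hη : 0 < η) :
    ∀ᶠ n in atTop, ⟪p, p - u n⟫ < η := by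
  by_contra hcon
  set S := {n | η ≤ ⟪p, p - u n⟫}
  have : (atTop ⊓ 𝓟 S).NeBot :=
    frequently_mem_iff_neBot.1 ((not_eventually.1 hcon).mono fun n => le_of_not_gt)
  -- a weak cluster point of `u` along `S`, via an ultrafilter and Banach–Alaoglu
  set U := Ultrafilter.of (atTop ⊓ 𝓟 S)
  have hUle : ↑U ≤ atTop ⊓ 𝓟 S := Ultrafilter.of_le _
  obtain ⟨z, hz⟩ := exists_tendsto_inner_of_norm_le U hu
  have hTz : T z = z := isFixedPt_of_tendsto_inner hT hu hz
    (hreg.mono_left (hUle.trans inf_le_left))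
  have hlim : Tendsto (fun n => ⟪p, p - u n⟫) U (𝓝 ⟪p, p - z⟫) := by
    simpa [inner_sub_right, real_inner_comm p] using (hz p).const_sub ⟪p, p⟫
  have : η ≤ ⟪p, p - z⟫ := ge_of_tendsto hlim (le_principal_iff.1 (hUle.trans inf_le_right))
  linarith [inner_sub_nonpos_of_isMinNormFixedPt hT hp hmin hTz]

namespace ModKM

variable {β a : ℕ → ℝ} {x : ℕ → H} {p : H}

theorem norm_succ_sub_le (hT : ∀ u v, ‖T u - T v‖ ≤ ‖u - v‖) (ha : ∀ n, 0 ≤ a n ∧ a n ≤ 1)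
    (hx : ∀ n, x (n + 1) = β n • x n + a n • (T (β n • x n) - β n • x n)) (hp : T p = p) (n : ℕ) :
    ‖x (n + 1) - p‖ ≤ ‖β n • x n - p‖ := by
  simpa [hx n, hp] using norm_relax_sub_relax_le hT (ha n).1 (ha n).2 (β n • x n) p

theorem norm_sub_le_max (hT : ∀ u v, ‖T u - T v‖ ≤ ‖u - v‖) (hβ : ∀ n, 0 < β n ∧ β n ≤ 1)
    (ha : ∀ n, 0 ≤ a n ∧ a n ≤ 1)
    (hx : ∀ n, x (n + 1) = β n • x n + a n • (T (β n • x n) - β n • x n)) (hp : T p = p) (n : ℕ) :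
    ‖x n - p‖ ≤ max ‖x 0 - p‖ ‖p‖ := by
  induction n with
  | zero => exact le_max_left _ _
  | succ n ih =>
    calc ‖x (n + 1) - p‖ ≤ β n * ‖x n - p‖ + (1 - β n) * ‖p‖ :=
          (norm_succ_sub_le hT ha hx hp n).trans (norm_smul_sub_le (hβ n).1.le (hβ n).2 _ _)
      _ ≤ β n * max ‖x 0 - p‖ ‖p‖ + (1 - β n) * max ‖x 0 - p‖ ‖p‖ :=
          add_le_add (mul_le_mul_of_nonneg_left ih (hβ n).1.le)
            (mul_le_mul_of_nonneg_left (le_max_right _ _) (sub_nonneg.2 (hβ n).2))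
      _ = max ‖x 0 - p‖ ‖p‖ := by ring

theorem norm_succ_succ_sub_le (hT : ∀ u v, ‖T u - T v‖ ≤ ‖u - v‖) (hβ : ∀ n, 0 < β n ∧ β n ≤ 1)
    (ha : ∀ n, 0 ≤ a n ∧ a n ≤ 1)
    (hx : ∀ n, x (n + 1) = β n • x n + a n • (T (β n • x n) - β n • x n)) (n : ℕ) :
    ‖x (n + 2) - x (n + 1)‖ ≤ β (n + 1) * ‖x (n + 1) - x n‖ + |β (n + 1) - β n| * ‖x n‖
      + |a (n + 1) - a n| * ‖T (β n • x n) - β n • x n‖ := by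
  set y := fun n => β n • x n
  have hsplit : x (n + 2) - x (n + 1) = (y (n + 1) + a (n + 1) • (T (y (n + 1)) - y (n + 1))
      - (y n + a (n + 1) • (T (y n) - y n))) + (a (n + 1) - a n) • (T (y n) - y n) := by
    have h1 : x (n + 2) = y (n + 1) + a (n + 1) • (T (y (n + 1)) - y (n + 1)) := hx (n + 1)
    have h0 : x (n + 1) = y n + a n • (T (y n) - y n) := hx n
    rw [h1, h0]; module
  have hy : ‖y (n + 1) - y n‖ ≤ β (n + 1) * ‖x (n + 1) - x n‖ + |β (n + 1) - β n| * ‖x n‖ := by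
    calc ‖y (n + 1) - y n‖ = ‖β (n + 1) • (x (n + 1) - x n) + (β (n + 1) - β n) • x n‖ := by
          simp only [y]; congr 1; module
      _ ≤ ‖β (n + 1) • (x (n + 1) - x n)‖ + ‖(β (n + 1) - β n) • x n‖ := norm_add_le _ _
      _ = β (n + 1) * ‖x (n + 1) - x n‖ + |β (n + 1) - β n| * ‖x n‖ := by
          rw [norm_smul, norm_smul, Real.norm_of_nonneg (hβ (n + 1)).1.le, Real.norm_eq_abs]
  calc ‖x (n + 2) - x (n + 1)‖ ≤ ‖y (n + 1) - y n‖ + ‖(a (n + 1) - a n) • (T (y n) - y n)‖ := by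
        rw [hsplit]
        exact (norm_add_le _ _).trans
          (add_le_add (norm_relax_sub_relax_le hT (ha _).1 (ha _).2 _ _) le_rfl)
    _ ≤ _ := by rw [norm_smul, Real.norm_eq_abs]; linarith

theorem exists_norm_le (hT : ∀ u v, ‖T u - T v‖ ≤ ‖u - v‖) (hβ : ∀ n, 0 < β n ∧ β n ≤ 1)
    (ha : ∀ n, 0 ≤ a n ∧ a n ≤ 1)
    (hx : ∀ n, x (n + 1) = β n • x n + a n • (T (β n • x n) - β n • x n)) (hp : T p = p) :
    ∃ M, ∀ n, ‖x n‖ ≤ M :=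
  ⟨max ‖x 0 - p‖ ‖p‖ + ‖p‖, fun n =>
    (norm_le_insert' _ p).trans (by linarith [norm_sub_le_max hT hβ ha hx hp n])⟩

theorem tendsto_norm_succ_sub (hT : ∀ u v, ‖T u - T v‖ ≤ ‖u - v‖)
    (hβ : ∀ n, 0 < β n ∧ β n ≤ 1) (hβdiv : ¬ Summable (fun n => 1 - β n))
    (hβvar : Summable (fun n => |β (n + 1) - β n|)) (ha : ∀ n, 0 ≤ a n ∧ a n ≤ 1)
    (havar : Summable (fun n => |a (n + 1) - a n|))
    (hx : ∀ n, x (n + 1) = β n • x n + a n • (T (β n • x n) - β n • x n)) (hp : T p = p) :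
    Tendsto (fun n => ‖x (n + 1) - x n‖) atTop (𝓝 0) := by
  obtain ⟨M, hM⟩ := exists_norm_le hT hβ ha hx hp
  have hTy : ∀ n, ‖T (β n • x n) - β n • x n‖ ≤ 2 * (M + ‖p‖) := fun n => by
    have hy : ‖β n • x n - p‖ ≤ M + ‖p‖ := by
      refine (norm_sub_le _ _).trans (add_le_add ?_ le_rfl)
      rw [norm_smul, Real.norm_of_nonneg (hβ n).1.le]
      exact (mul_le_of_le_one_left (norm_nonneg _) (hβ n).2).trans (hM n)
    calc ‖T (β n • x n) - β n • x n‖ ≤ ‖T (β n • x n) - p‖ + ‖β n • x n - p‖ :=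
          (norm_sub_le_norm_sub_add_norm_sub _ p _).trans_eq (by rw [norm_sub_rev p])
      _ ≤ 2 * (M + ‖p‖) := by linarith [norm_sub_le_of_isFixedPt hT hp (β n • x n)]
  refine tendsto_zero_of_le_one_sub_mul_add_mul_add (γ := fun n => 1 - β (n + 1)) (δ := 0)
    (ε := fun n => |β (n + 1) - β n| * M + |a (n + 1) - a n| * (2 * (M + ‖p‖)))
    (fun n => norm_nonneg _) (fun n => sub_nonneg.2 (hβ _).2) (fun n => by linarith [(hβ (n + 1)).1])
    (fun h => hβdiv ((summable_nat_add_iff 1).1 h)) (fun η hη => .of_forall fun n => hη.le)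
    (fun n => by have hM0 := (hM 0).trans' (norm_nonneg _); positivity)
    ((hβvar.mul_right M).add (havar.mul_right _)) fun n => ?_
  have := norm_succ_succ_sub_le hT hβ ha hx n
  have := mul_le_mul_of_nonneg_left (hM n) (abs_nonneg (β (n + 1) - β n))
  have := mul_le_mul_of_nonneg_left (hTy n) (abs_nonneg (a (n + 1) - a n))
  simp only [Pi.zero_apply, mul_zero, add_zero, sub_sub_cancel]
  linarith

theorem tendsto_norm_apply_sub (hT : ∀ u v, ‖T u - T v‖ ≤ ‖u - v‖)
    (hβlim : Tendsto β atTop (𝓝 1)) {c : ℝ} (hc : 0 < c) (hac : ∀ᶠ n in atTop, c ≤ a n)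
    (hx : ∀ n, x (n + 1) = β n • x n + a n • (T (β n • x n) - β n • x n)) {M : ℝ}
    (hM : ∀ n, ‖x n‖ ≤ M) (hreg : Tendsto (fun n => ‖x (n + 1) - x n‖) atTop (𝓝 0)) :
    Tendsto (fun n => ‖T (x n) - x n‖) atTop (𝓝 0) := by
  set y := fun n => β n • x n
  have hxy : Tendsto (fun n => ‖x n - y n‖) atTop (𝓝 0) := by
    have hle : ∀ n, ‖x n - y n‖ ≤ |1 - β n| * M := fun n => by
      rw [show x n - y n = (1 - β n) • x n by simp only [y]; module, norm_smul, Real.norm_eq_abs]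
      exact mul_le_mul_of_nonneg_left (hM n) (abs_nonneg _)
    exact squeeze_zero (fun _ => norm_nonneg _) hle
      (by simpa using ((hβlim.const_sub 1).abs.mul_const M))
  have hTy : Tendsto (fun n => ‖T (y n) - y n‖) atTop (𝓝 0) := by
    -- `a n • (T (y n) - y n) = x (n + 1) - y n`
    have hle : ∀ᶠ n in atTop, ‖T (y n) - y n‖ ≤ (‖x (n + 1) - x n‖ + ‖x n - y n‖) / c := by
      filter_upwards [hac] with n hn
      rw [le_div_iff₀ hc]
      calc ‖T (y n) - y n‖ * c ≤ a n * ‖T (y n) - y n‖ := by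
            rw [mul_comm]; exact mul_le_mul_of_nonneg_right hn (norm_nonneg _)
        _ = ‖x (n + 1) - y n‖ := by
            rw [hx n, add_sub_cancel_left, norm_smul, Real.norm_of_nonneg (hc.le.trans hn)]
        _ ≤ _ := norm_sub_le_norm_sub_add_norm_sub _ _ _
    exact squeeze_zero' (.of_forall fun _ => norm_nonneg _) hle
      (by simpa using (hreg.add hxy).div_const c)
  have hle : ∀ n, ‖T (x n) - x n‖ ≤ 2 * ‖x n - y n‖ + ‖T (y n) - y n‖ := fun n => by
    have h1 := norm_sub_le_norm_sub_add_norm_sub (T (x n)) (T (y n)) (x n)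
    have h2 := norm_sub_le_norm_sub_add_norm_sub (T (y n)) (y n) (x n)
    have := hT (x n) (y n)
    rw [norm_sub_rev (y n)] at h2
    linarith
  exact squeeze_zero (fun _ => norm_nonneg _) hle (by simpa using (hxy.const_mul 2).add hTy)

theorem norm_succ_sub_sq_le (hT : ∀ u v, ‖T u - T v‖ ≤ ‖u - v‖) (hβ : ∀ n, 0 < β n ∧ β n ≤ 1)
    (ha : ∀ n, 0 ≤ a n ∧ a n ≤ 1)
    (hx : ∀ n, x (n + 1) = β n • x n + a n • (T (β n • x n) - β n • x n)) (hp : T p = p) (n : ℕ) :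
    ‖x (n + 1) - p‖ ^ 2 ≤ β n * ‖x n - p‖ ^ 2
      + (1 - β n) * (2 * β n * ⟪p, p - x n⟫ + (1 - β n) * ‖p‖ ^ 2) := by
  obtain ⟨hβ0, hβ1⟩ := hβ n
  have hexp : ‖β n • x n - p‖ ^ 2 = β n ^ 2 * ‖x n - p‖ ^ 2
      + 2 * β n * (1 - β n) * ⟪p, p - x n⟫ + (1 - β n) ^ 2 * ‖p‖ ^ 2 := by
    rw [show β n • x n - p = β n • (x n - p) - (1 - β n) • p by module, norm_sub_sq_real,
      norm_smul, norm_smul, real_inner_smul_left, real_inner_smul_right,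
      Real.norm_of_nonneg hβ0.le, Real.norm_of_nonneg (sub_nonneg.2 hβ1),
      show ⟪p, p - x n⟫ = -⟪x n - p, p⟫ by rw [real_inner_comm, ← inner_neg_left, neg_sub]]
    ring
  have := pow_le_pow_left₀ (norm_nonneg _) (norm_succ_sub_le hT ha hx hp n) 2
  nlinarith [mul_nonneg (mul_nonneg hβ0.le (sub_nonneg.2 hβ1)) (sq_nonneg ‖x n - p‖)]

theorem tendsto_of_isMinNormFixedPt [CompleteSpace H] (hT : ∀ u v, ‖T u - T v‖ ≤ ‖u - v‖)
    (hβ : ∀ n, 0 < β n ∧ β n ≤ 1) (hβlim : Tendsto β atTop (𝓝 1))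
    (hβdiv : ¬ Summable (fun n => 1 - β n)) (hβvar : Summable (fun n => |β (n + 1) - β n|))
    (ha : ∀ n, 0 ≤ a n ∧ a n ≤ 1) {c : ℝ} (hc : 0 < c) (hac : ∀ᶠ n in atTop, c ≤ a n)
    (havar : Summable (fun n => |a (n + 1) - a n|))
    (hx : ∀ n, x (n + 1) = β n • x n + a n • (T (β n • x n) - β n • x n)) (hp : T p = p)
    (hmin : ∀ q, T q = q → ‖p‖ ≤ ‖q‖) :
    Tendsto x atTop (𝓝 p) := by
  obtain ⟨M, hM⟩ := exists_norm_le hT hβ ha hx hp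
  have hreg := tendsto_norm_apply_sub hT hβlim hc hac hx hM
    (tendsto_norm_succ_sub hT hβ hβdiv hβvar ha havar hx hp)
  have hδ : ∀ η > 0, ∀ᶠ n in atTop, 2 * β n * ⟪p, p - x n⟫ + (1 - β n) * ‖p‖ ^ 2 ≤ η := by
    intro η hη
    have hβp : Tendsto (fun n => (1 - β n) * ‖p‖ ^ 2) atTop (𝓝 0) := by
      simpa using (hβlim.const_sub 1).mul_const (‖p‖ ^ 2)
    filter_upwards [eventually_inner_sub_lt hT hp hmin hM hreg (by positivity : 0 < η / 4),
      hβp.eventually (gt_mem_nhds (half_pos hη))] with n hinner hpn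
    obtain ⟨hβ0, hβ1⟩ := hβ n
    rcases le_or_gt ⟪p, p - x n⟫ 0 with h | h <;> nlinarith
  have hsq : Tendsto (fun n => ‖x n - p‖ ^ 2) atTop (𝓝 0) :=
    tendsto_zero_of_le_one_sub_mul_add_mul_add (γ := fun n => 1 - β n) (ε := 0)
      (fun n => by positivity) (fun n => sub_nonneg.2 (hβ n).2)
      (fun n => by linarith [(hβ n).1]) hβdiv hδ (fun _ => le_rfl) summable_zero
      fun n => by simpa using norm_succ_sub_sq_le hT hβ ha hx hp n
  rw [tendsto_iff_norm_sub_tendsto_zero]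
  simpa [Real.sqrt_sq (norm_nonneg _)] using hsq.sqrt

end ModKM

end Hilbert

theorem modKM_averaged_strong_convergence_general
    {H : Type*} [NormedAddCommGroup H] [InnerProductSpace ℝ H] [CompleteSpace H]
    (α : ℝ) (hα : α ∈ Set.Ioo (0 : ℝ) 1)
    (R : H → H) (hR : IsAveraged α R)
    (β lam : ℕ → ℝ)
    (hβ : ∀ n, 0 < β n ∧ β n ≤ 1)
    (hβlim : Tendsto β atTop (nhds 1))
    (hβdiv : ¬ Summable (fun n => 1 - β n))
    (hβvar : Summable (fun n => |β (n + 1) - β n|))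
    (hlam : ∀ n, 0 < lam n ∧ lam n ≤ 1 / α)
    (hlaminf : 0 < Filter.liminf lam Filter.atTop)
    (hlamvar : Summable (fun n => |lam (n + 1) - lam n|))
    (x : ℕ → H)
    (hiter : ∀ n, x (n + 1) = β n • x n + lam n • (R (β n • x n) - β n • x n))
    (p : H) (hp : R p = p) (hpmin : ∀ q : H, R q = q → ‖p‖ ≤ ‖q‖) :
    Tendsto x atTop (nhds p) := by
  obtain ⟨T, hT, hRT⟩ := hR
  have hRsub : ∀ u, R u - u = α • (T u - u) := fun u => by rw [hRT]; module
  have hfix : ∀ q, R q = q ↔ T q = q := fun q => by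
    rw [← sub_eq_zero, hRsub, smul_eq_zero, sub_eq_zero, or_iff_right hα.1.ne']
  have hαlam : ∀ n, 0 ≤ α * lam n ∧ α * lam n ≤ 1 := fun n =>
    ⟨(mul_pos hα.1 (hlam n).1).le, by simpa using (le_div_iff₀' hα.1).1 (hlam n).2⟩
  have hlam_lb : ∀ᶠ n in atTop, α * (liminf lam atTop / 2) ≤ α * lam n :=
    (eventually_lt_of_lt_liminf (half_lt_self hlaminf)
      (isBoundedUnder_of ⟨0, fun n => (hlam n).1.le⟩)).mono fun n hn =>
      mul_le_mul_of_nonneg_left hn.le hα.1.le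
  refine ModKM.tendsto_of_isMinNormFixedPt hT hβ hβlim hβdiv hβvar hαlam
    (mul_pos hα.1 (half_pos hlaminf)) hlam_lb ?_ (fun n => by rw [hiter n, hRsub, smul_smul, mul_comm])
    ((hfix p).1 hp) fun q hq => hpmin q ((hfix q).2 hq)
  simpa [← mul_sub, abs_mul, abs_of_pos hα.1] using hlamvar.mul_left α

/-- Strong convergence of the modified Krasnosel'skii–Mann iteration for an
`α`-averaged operator `R` (with `0 < λ n ≤ 1/α`) to the minimal norm fixed
point of `R`, i.e. the projection of `0` onto `Fix R`. -/
theorem modKM_averaged_strong_convergence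
    {H : Type*} [NormedAddCommGroup H] [InnerProductSpace ℝ H] [CompleteSpace H]
    (α : ℝ) (hα : α ∈ Set.Ioo (0 : ℝ) 1)
    (R : H → H) (hR : IsAveraged α R)
    (hfix_ne : {z : H | R z = z}.Nonempty)
    (β lam : ℕ → ℝ)
    (hβ : ∀ n, 0 < β n ∧ β n ≤ 1)
    (hβlim : Tendsto β atTop (nhds 1))
    (hβdiv : ¬ Summable (fun n => 1 - β n))
    (hβvar : Summable (fun n => |β (n + 1) - β n|))
    (hlam : ∀ n, 0 < lam n ∧ lam n ≤ 1 / α)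
    (hlaminf : 0 < Filter.liminf lam Filter.atTop)
    (hlamvar : Summable (fun n => |lam (n + 1) - lam n|))
    (x : ℕ → H)
    (hiter : ∀ n, x (n + 1) = β n • x n + lam n • (R (β n • x n) - β n • x n))
    (p : H) (hp : R p = p) (hpmin : ∀ q : H, R q = q → ‖p‖ ≤ ‖q‖) :
    Tendsto x atTop (nhds p) :=
  modKM_averaged_strong_convergence_general α hα R hR β lam hβ hβlim hβdiv hβvar hlam hlaminf
    hlamvar x hiter p hp hpmin
end

section
/- Let A : H ⇉ H be maximally monotone, B : H → H be β-cocoercive (β > 0), with zer(A+B) ≠ ∅, and γ ∈ (0, 2β]. Under the parameter conditions 0 < β_n ≤ 1, β_n → 1, ∑(1-β_n) = ∞, ∑|β_n - β_{n-1}| < ∞, 0 < λ_n ≤ (4β - γ)/(2β), liminf λ_n > 0, ∑|λ_n - λ_{n-1}| < ∞, the iteration x_{n+1} = (1-λ_n)β_n x_n + λ_n J_{γA}(β_n x_n - γ B(β_n x_n)) converges strongly to the projection of 0 onto zer(A+B), the minimal norm zero of A + B. -/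
open Filter Topology Pointwise RealInnerProductSpace

section
variable {H : Type*} [NormedAddCommGroup H] [InnerProductSpace ℝ H]

def MonotoneOp (A : H → Set H) : Prop :=
  ∀ x y u v : H, u ∈ A x → v ∈ A y → 0 ≤ ⟪x - y, u - v⟫

def MaximallyMonotoneOp (A : H → Set H) : Prop :=
  MonotoneOp A ∧ ∀ x u : H, (∀ y v : H, v ∈ A y → 0 ≤ ⟪x - y, u - v⟫) → u ∈ A x

end

/-!
For `T = J ∘ (id - γ B)`, firm nonexpansiveness of the resolvent `J` together with the
cocoercivity of `B` makes `T` averaged, so that every relaxation `(1 - λ) id + λ T` with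
`0 ≤ λ ≤ (4β - γ) / (2β)` is nonexpansive; the fixed points of `T` are the zeros of `A + B`.

For the Tikhonov-regularized relaxed iteration `x (n+1) = (1 - λ n) y n + λ n T (y n)`,
`y n = β n x n`, Xu's lemma on recursions `a (n+1) ≤ (1 - δ n) a n + δ n σ n + ε n` is used twice:
first it gives `x (n+1) - x n → 0`, hence `y n - T (y n) → 0`; then it gives `‖x n - p‖² → 0`,
with `δ n = 1 - β n` and `σ n = ‖p‖² - β n ‖x n‖²`, as soon as `limsup σ n ≤ 0`.

That last bound replaces the usual weak-cluster-point argument. If `‖y n‖² ≤ ‖p‖² - η` along a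
subsequence, the asymptotic centre of that subsequence, the minimizer of
`z ↦ limsup ‖y k - z‖²`, exists by completeness and uniform convexity, is a fixed point of `T`
because `T` is nonexpansive and `y k - T (y k) → 0`, and lies in the same ball, contradicting the
minimality of `‖p‖`.
-/

open Function

theorem tendsto_prod_one_sub_of_not_summable {δ : ℕ → ℝ} (hδ : ∀ n, δ n ∈ Set.Icc (0 : ℝ) 1)
    (hδdiv : ¬ Summable δ) :
    Tendsto (fun n => ∏ i ∈ Finset.range n, (1 - δ i)) atTop (𝓝 0) := by
  have hsum := (not_summable_iff_tendsto_nat_atTop_of_nonneg fun n => (hδ n).1).1 hδdiv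
  refine squeeze_zero (fun n => Finset.prod_nonneg fun i _ => sub_nonneg.2 (hδ i).2)
    (fun n => ?_) (Real.tendsto_exp_atBot.comp (tendsto_neg_atBot_iff.2 hsum))
  calc ∏ i ∈ Finset.range n, (1 - δ i) ≤ ∏ i ∈ Finset.range n, Real.exp (-δ i) :=
        Finset.prod_le_prod (fun i _ => sub_nonneg.2 (hδ i).2)
          fun i _ => Real.one_sub_le_exp_neg _
    _ = Real.exp (-∑ i ∈ Finset.range n, δ i) := by
        rw [← Finset.sum_neg_distrib, Real.exp_sum]

theorem eventually_le_of_le_one_sub_mul {δ c : ℕ → ℝ} (hδ : ∀ n, δ n ∈ Set.Icc (0 : ℝ) 1)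
    (hδdiv : ¬ Summable δ) (hc : ∀ n, c (n + 1) ≤ (1 - δ n) * c n) {η : ℝ} (hη : 0 < η) :
    ∀ᶠ n in atTop, c n ≤ η := by
  have hbound : ∀ n, c n ≤ (∏ i ∈ Finset.range n, (1 - δ i)) * max (c 0) 0 := by
    intro n
    induction n with
    | zero => simp
    | succ n ih =>
      rw [Finset.prod_range_succ, mul_comm _ (1 - δ n), mul_assoc]
      exact (hc n).trans (mul_le_mul_of_nonneg_left ih (sub_nonneg.2 (hδ n).2))
  have hlim := (tendsto_prod_one_sub_of_not_summable hδ hδdiv).mul_const (max (c 0) 0)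
  rw [zero_mul] at hlim
  filter_upwards [hlim.eventually_le_const hη] with n hn using (hbound n).trans hn

/-- Xu's lemma. -/
theorem tendsto_zero_of_le_one_sub_mul_add_s10 {a δ σ ε : ℕ → ℝ} (ha : ∀ n, 0 ≤ a n)
    (hδ : ∀ n, δ n ∈ Set.Icc (0 : ℝ) 1) (hδdiv : ¬ Summable δ)
    (hσ : ∀ η > 0, ∀ᶠ n in atTop, σ n ≤ η) (hε0 : ∀ n, 0 ≤ ε n) (hε : Summable ε)
    (hrec : ∀ n, a (n + 1) ≤ (1 - δ n) * a n + δ n * σ n + ε n) :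
    Tendsto a atTop (𝓝 0) := by
  refine tendsto_order.2 ⟨fun b hb => .of_forall fun n => hb.trans_le (ha n), fun b hb => ?_⟩
  have hη : 0 < b / 4 := by positivity
  obtain ⟨N, hN⟩ := ((hσ _ hη).and
    ((tendsto_sum_nat_add ε).eventually_le_const hη)).exists_forall_of_atTop
  set E : ℕ → ℝ := fun k => ∑ i ∈ Finset.range k, ε (i + N)
  have hE : ∀ k, 0 ≤ E k ∧ E k ≤ b / 4 := fun k =>
    ⟨Finset.sum_nonneg fun i _ => hε0 _, (((summable_nat_add_iff N).2 hε).sum_le_tsum _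
      fun i _ => hε0 _).trans (hN N le_rfl).2⟩
  -- Subtracting the accumulated errors leaves a homogeneous recursion.
  have hc : ∀ k, a (k + 1 + N) - b / 4 - E (k + 1)
      ≤ (1 - δ (k + N)) * (a (k + N) - b / 4 - E k) := by
    intro k
    have hσk := mul_le_mul_of_nonneg_left (hN (k + N) (by omega)).1 (hδ (k + N)).1
    have hδE := mul_nonneg (hδ (k + N)).1 (hE k).1
    have hEsucc : E (k + 1) = E k + ε (k + N) := Finset.sum_range_succ _ _
    rw [hEsucc, add_right_comm k 1 N]
    linarith [hrec (k + N)]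
  obtain ⟨K, hK⟩ := (eventually_le_of_le_one_sub_mul (c := fun k => a (k + N) - b / 4 - E k)
    (fun k => hδ (k + N)) (by rwa [summable_nat_add_iff]) hc hη).exists_forall_of_atTop
  refine eventually_atTop.2 ⟨K + N, fun n hn => ?_⟩
  have hn' := hK (n - N) (by omega)
  rw [Nat.sub_add_cancel (by omega)] at hn'
  linarith [(hE (n - N)).2]

section Relaxation

variable {E : Type*} [AddCommGroup E] [Module ℝ E]

def relax (T : E → E) (t : ℝ) (y : E) : E := (1 - t) • y + t • T y

theorem relax_one (T : E → E) : relax T 1 = T := by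
  ext y; simp [relax]

theorem relax_sub_relax (T : E → E) (s t : ℝ) (y : E) :
    relax T s y - relax T t y = (s - t) • (T y - y) := by
  simp only [relax]; module

theorem relax_of_isFixedPt {T : E → E} {z : E} (hz : IsFixedPt T z) (t : ℝ) :
    relax T t z = z := by
  rw [relax, hz.eq]; module

end Relaxation

theorem norm_map_sub_le {E : Type*} [SeminormedAddCommGroup E] {T : E → E}
    (hT : LipschitzWith 1 T) {p : E} (hp : IsFixedPt T p) (y : E) :
    ‖T y - y‖ ≤ 2 * (‖y‖ + ‖p‖) := by
  have hTy := hT.norm_sub_le y p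
  rw [NNReal.coe_one, one_mul, hp.eq] at hTy
  calc ‖T y - y‖ ≤ ‖T y - p‖ + ‖p - y‖ := norm_sub_le_norm_sub_add_norm_sub _ _ _
    _ ≤ 2 * ‖y - p‖ := by rw [norm_sub_rev p y]; linarith
    _ ≤ 2 * (‖y‖ + ‖p‖) := by gcongr; exact norm_sub_le _ _

section ForwardBackward

variable {H : Type*} [NormedAddCommGroup H] [InnerProductSpace ℝ H] {A : H → Set H}
  {γ : ℝ} {J : H → H}

theorem lipschitzWith_one_relax {T : H → H} {κ t : ℝ}
    (hT : ∀ u v, ‖T u - T v‖ ^ 2 + κ * ‖(u - T u) - (v - T v)‖ ^ 2 ≤ ‖u - v‖ ^ 2)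
    (ht₀ : 0 ≤ t) (ht : t ≤ 1 + κ) : LipschitzWith 1 (relax T t) := by
  refine lipschitzWith_iff_norm_sub_le.2 fun u v => ?_
  rw [NNReal.coe_one, one_mul]
  set d := u - v
  set w := (T u - T v) - d
  have hrelax : relax T t u - relax T t v = d + t • w := by simp only [relax, d, w]; module
  have hTuv := hT u v
  rw [show T u - T v = d + w by simp only [w]; abel, show (u - T u) - (v - T v) = -w by
    simp only [w, d]; abel, norm_neg, norm_add_sq_real] at hTuv
  have hexp : ‖d + t • w‖ ^ 2 = ‖d‖ ^ 2 + 2 * t * ⟪d, w⟫ + t ^ 2 * ‖w‖ ^ 2 := by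
    rw [norm_add_sq_real, inner_smul_right, norm_smul, Real.norm_eq_abs, mul_pow, sq_abs]; ring
  rw [hrelax, ← pow_le_pow_iff_left₀ (norm_nonneg _) (norm_nonneg _) two_ne_zero, hexp]
  -- `2 ⟪d, w⟫ ≤ -(1 + κ) ‖w‖²`, and `t (t - (1 + κ)) ≤ 0`
  nlinarith [mul_nonneg ht₀ (sq_nonneg ‖w‖),
    mul_nonneg (mul_nonneg ht₀ (sub_nonneg.2 ht)) (sq_nonneg ‖w‖)]

theorem resolvent_eq_iff (hA : MonotoneOp A) (hγ : 0 ≤ γ) (hJ : ∀ x, x - J x ∈ γ • A (J x))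
    {y w : H} : J y = w ↔ y - w ∈ γ • A w := by
  refine ⟨fun h => h ▸ hJ y, fun h => ?_⟩
  obtain ⟨a, ha, hay⟩ := Set.mem_smul_set.1 (hJ y)
  obtain ⟨b, hb, hbw⟩ := Set.mem_smul_set.1 h
  have hmono := hA _ _ _ _ ha hb
  have hsq : ‖J y - w‖ ^ 2 = -(γ * ⟪J y - w, a - b⟫) := by
    rw [← real_inner_smul_right, smul_sub, hay, hbw, ← real_inner_self_eq_norm_sq,
      ← inner_neg_right]
    congr 1; abel
  have : ‖J y - w‖ ^ 2 = 0 := le_antisymm (by nlinarith [mul_nonneg hγ hmono]) (sq_nonneg _)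
  rwa [sq_eq_zero_iff, norm_sub_eq_zero_iff] at this

theorem resolvent_sq_norm_sub_le_inner (hA : MonotoneOp A) (hγ : 0 ≤ γ)
    (hJ : ∀ x, x - J x ∈ γ • A (J x)) (u v : H) :
    ‖J u - J v‖ ^ 2 ≤ ⟪J u - J v, u - v⟫ := by
  obtain ⟨a, ha, hau⟩ := Set.mem_smul_set.1 (hJ u)
  obtain ⟨b, hb, hbv⟩ := Set.mem_smul_set.1 (hJ v)
  have hmono := mul_nonneg hγ (hA _ _ _ _ ha hb)
  rw [← real_inner_smul_right, smul_sub, hau, hbv,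
    show u - J u - (v - J v) = (u - v) - (J u - J v) by abel, inner_sub_right,
    real_inner_self_eq_norm_sq] at hmono
  linarith

variable {βc : ℝ} {B : H → H}

theorem forwardBackward_averaged (hA : MonotoneOp A) (hβc : 0 ≤ βc)
    (hB : ∀ x y : H, βc * ‖B x - B y‖ ^ 2 ≤ ⟪x - y, B x - B y⟫) (hγ : 0 ≤ γ)
    (hJ : ∀ x, x - J x ∈ γ • A (J x)) (u v : H) :
    2 * βc * ‖J (u - γ • B u) - J (v - γ • B v)‖ ^ 2
      + (2 * βc - γ) * ‖(u - J (u - γ • B u)) - (v - J (v - γ • B v))‖ ^ 2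
      ≤ 2 * βc * ‖u - v‖ ^ 2 := by
  have hfirm := resolvent_sq_norm_sub_le_inner hA hγ hJ (u - γ • B u) (v - γ • B v)
  rw [show u - γ • B u - (v - γ • B v) = (u - v) - γ • (B u - B v) by rw [smul_sub]; abel,
    inner_sub_right, real_inner_smul_right] at hfirm
  have hcoco := hB u v
  set t := J (u - γ • B u) - J (v - γ • B v)
  set d := u - v
  set b := B u - B v
  set w := t - d
  have hres : (u - J (u - γ • B u)) - (v - J (v - γ • B v)) = -w := by simp only [w, t, d]; abel
  have hw : ‖w‖ ^ 2 = ‖t‖ ^ 2 - 2 * ⟪t, d⟫ + ‖d‖ ^ 2 := norm_sub_sq_real t d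
  have hwb : ⟪w, b⟫ = ⟪t, b⟫ - ⟪d, b⟫ := inner_sub_left t d b
  -- `‖w + 2 βc b‖² ≥ 0` absorbs the cross term `⟪w, b⟫`
  have hsq : 0 ≤ ‖w + (2 * βc) • b‖ ^ 2 := sq_nonneg _
  rw [norm_add_sq_real, real_inner_smul_right, norm_smul, Real.norm_eq_abs, mul_pow, sq_abs,
    hwb] at hsq
  rw [hres, norm_neg, hw]
  nlinarith [mul_le_mul_of_nonneg_left hfirm (by positivity : (0 : ℝ) ≤ 4 * βc),
    mul_le_mul_of_nonneg_left hcoco (by positivity : (0 : ℝ) ≤ 4 * βc * γ),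
    mul_nonneg hγ hsq]

theorem lipschitzWith_one_relax_forwardBackward (hA : MonotoneOp A) (hβc : 0 < βc)
    (hB : ∀ x y : H, βc * ‖B x - B y‖ ^ 2 ≤ ⟪x - y, B x - B y⟫) (hγ : 0 ≤ γ)
    (hJ : ∀ x, x - J x ∈ γ • A (J x)) {t : ℝ} (ht₀ : 0 ≤ t)
    (ht : t ≤ (4 * βc - γ) / (2 * βc)) :
    LipschitzWith 1 (relax (fun z => J (z - γ • B z)) t) := by
  refine lipschitzWith_one_relax (κ := (2 * βc - γ) / (2 * βc)) (fun u v => ?_) ht₀ ?_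
  · have := forwardBackward_averaged hA hβc.le hB hγ hJ u v
    have h2βc : (0 : ℝ) < 2 * βc := by positivity
    rw [div_mul_eq_mul_div, add_div' _ _ _ h2βc.ne', div_le_iff₀ h2βc]
    linarith
  · exact ht.trans_eq (by field_simp; ring)

theorem isFixedPt_forwardBackward_iff (hA : MonotoneOp A) (hγ : 0 < γ)
    (hJ : ∀ x, x - J x ∈ γ • A (J x)) (z : H) :
    IsFixedPt (fun z => J (z - γ • B z)) z ↔ -B z ∈ A z := by
  rw [IsFixedPt, resolvent_eq_iff hA hγ.le hJ, show z - γ • B z - z = γ • -B z by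
    rw [smul_neg]; abel, Set.smul_mem_smul_set_iff₀ hγ.ne']

end ForwardBackward

section AsymptoticCenter

variable {H : Type*} [NormedAddCommGroup H] {u : ℕ → H} {C : ℝ}

noncomputable def asymptoticRadiusSq (u : ℕ → H) (z : H) : ℝ :=
  limsup (fun k => ‖u k - z‖ ^ 2) atTop

theorem asymptoticRadiusSq_le_of_eventually_le {z : H} {c : ℝ}
    (h : ∀ᶠ k in atTop, ‖u k - z‖ ^ 2 ≤ c) : asymptoticRadiusSq u z ≤ c :=
  limsup_le_of_le (isCoboundedUnder_le_of_le atTop fun _ => sq_nonneg _) h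

theorem isBoundedUnder_sq_norm_sub (hC : ∀ k, ‖u k‖ ≤ C) (z : H) :
    IsBoundedUnder (· ≤ ·) atTop fun k => ‖u k - z‖ ^ 2 :=
  isBoundedUnder_of ⟨(C + ‖z‖) ^ 2, fun k =>
    pow_le_pow_left₀ (norm_nonneg _) ((norm_sub_le _ _).trans (by linarith [hC k])) 2⟩

theorem asymptoticRadiusSq_nonneg (hC : ∀ k, ‖u k‖ ≤ C) (z : H) : 0 ≤ asymptoticRadiusSq u z :=
  le_limsup_of_frequently_le (.of_forall fun _ => sq_nonneg _) (isBoundedUnder_sq_norm_sub hC z)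

theorem eventually_sq_norm_sub_le_asymptoticRadiusSq_add (hC : ∀ k, ‖u k‖ ≤ C) (z : H) {ε : ℝ}
    (hε : 0 < ε) :
    ∀ᶠ k in atTop, ‖u k - z‖ ^ 2 ≤ asymptoticRadiusSq u z + ε :=
  (eventually_lt_of_limsup_lt (lt_add_of_pos_right _ hε)
    (isBoundedUnder_sq_norm_sub hC z)).mono fun _ => le_of_lt

theorem asymptoticRadiusSq_le_add (hC : ∀ k, ‖u k‖ ≤ C) (z q : H) :
    asymptoticRadiusSq u q
      ≤ asymptoticRadiusSq u z + 2 * (C + ‖z‖) * ‖z - q‖ + ‖z - q‖ ^ 2 := by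
  refine le_of_forall_pos_le_add fun ε hε => asymptoticRadiusSq_le_of_eventually_le ?_
  filter_upwards [eventually_sq_norm_sub_le_asymptoticRadiusSq_add hC z hε] with k hk
  have htri : ‖u k - q‖ ≤ ‖u k - z‖ + ‖z - q‖ := norm_sub_le_norm_sub_add_norm_sub _ _ _
  have hz : ‖u k - z‖ ≤ C + ‖z‖ := (norm_sub_le _ _).trans (by linarith [hC k])
  have hzq := mul_le_mul_of_nonneg_right hz (norm_nonneg (z - q))
  nlinarith [norm_nonneg (u k - q), norm_nonneg (u k - z)]

theorem asymptoticRadiusSq_map_le {T : H → H} (hT : LipschitzWith 1 T) (hC : ∀ k, ‖u k‖ ≤ C)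
    (hu : Tendsto (fun k => ‖u k - T (u k)‖) atTop (𝓝 0)) (z : H) :
    asymptoticRadiusSq u (T z) ≤ asymptoticRadiusSq u z := by
  refine le_of_forall_pos_le_add fun ε hε => asymptoticRadiusSq_le_of_eventually_le ?_
  have herr : Tendsto (fun k => ‖u k - T (u k)‖ * (‖u k - T (u k)‖ + 2 * (C + ‖z‖)))
      atTop (𝓝 0) := by
    simpa using hu.mul (hu.add_const (2 * (C + ‖z‖)))
  filter_upwards [eventually_sq_norm_sub_le_asymptoticRadiusSq_add hC z (half_pos hε),
    herr.eventually_le_const (half_pos hε)] with k hk herrk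
  have hTz : ‖u k - T z‖ ≤ ‖u k - T (u k)‖ + ‖u k - z‖ := by
    have := hT.norm_sub_le (u k) z
    rw [NNReal.coe_one, one_mul] at this
    linarith [norm_sub_le_norm_sub_add_norm_sub (u k) (T (u k)) (T z)]
  have hz : ‖u k - z‖ ≤ C + ‖z‖ := (norm_sub_le _ _).trans (by linarith [hC k])
  nlinarith [norm_nonneg (u k - T z), norm_nonneg (u k - T (u k)), norm_nonneg (u k - z)]

variable [InnerProductSpace ℝ H]

theorem asymptoticRadiusSq_midpoint_le (hC : ∀ k, ‖u k‖ ≤ C) (z w : H) :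
    asymptoticRadiusSq u (midpoint ℝ z w)
      ≤ asymptoticRadiusSq u z / 2 + asymptoticRadiusSq u w / 2 - ‖z - w‖ ^ 2 / 4 := by
  refine le_of_forall_pos_le_add fun ε hε => asymptoticRadiusSq_le_of_eventually_le ?_
  filter_upwards [eventually_sq_norm_sub_le_asymptoticRadiusSq_add hC z (half_pos hε),
    eventually_sq_norm_sub_le_asymptoticRadiusSq_add hC w (half_pos hε)] with k hz hw
  have hpar := parallelogram_law_with_norm ℝ (u k - z) (u k - w)
  have hsum : u k - z + (u k - w) = (2 : ℝ) • (u k - midpoint ℝ z w) := by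
    rw [midpoint_eq_smul_add, invOf_eq_inv]; module
  rw [hsum, norm_smul, Real.norm_two, show u k - z - (u k - w) = w - z by abel,
    norm_sub_rev w z] at hpar
  linarith

theorem exists_forall_asymptoticRadiusSq_le [CompleteSpace H] (hC : ∀ k, ‖u k‖ ≤ C) :
    ∃ q, ∀ z, asymptoticRadiusSq u q ≤ asymptoticRadiusSq u z := by
  set φ := asymptoticRadiusSq u
  have hbdd : BddBelow (Set.range φ) :=
    ⟨0, Set.forall_mem_range.2 (asymptoticRadiusSq_nonneg hC)⟩
  set m := sInf (Set.range φ)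
  have hm : ∀ z, m ≤ φ z := fun z => csInf_le hbdd (Set.mem_range_self z)
  obtain ⟨v, -, hv, hvφ⟩ := exists_seq_tendsto_sInf (Set.range_nonempty φ) hbdd
  choose zs hzs using hvφ
  have hφzs : Tendsto (fun k => φ (zs k)) atTop (𝓝 m) := by simpa only [hzs] using hv
  have hcauchy : CauchySeq zs := by
    refine Metric.cauchySeq_iff'.2 fun ε hε => ?_
    obtain ⟨N, hN⟩ := (hφzs.eventually (eventually_lt_nhds
      (lt_add_of_pos_right m (by positivity : 0 < ε ^ 2 / 4)))).exists_forall_of_atTop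
    refine ⟨N, fun n hn => ?_⟩
    have hmid := asymptoticRadiusSq_midpoint_le hC (zs n) (zs N)
    have hsq : ‖zs n - zs N‖ ^ 2 < ε ^ 2 := by
      linarith [hm (midpoint ℝ (zs n) (zs N)), hN n hn, hN N le_rfl]
    rw [dist_eq_norm]
    exact (pow_lt_pow_iff_left₀ (norm_nonneg _) hε.le two_ne_zero).1 hsq
  obtain ⟨q, hq⟩ := cauchySeq_tendsto_of_complete hcauchy
  refine ⟨q, fun z => le_trans ?_ (hm z)⟩
  have hdist : Tendsto (fun k => ‖zs k - q‖) atTop (𝓝 0) := by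
    simpa using (hq.sub_const q).norm
  have hbound := (hφzs.add ((((tendsto_const_nhds (x := C)).add hq.norm).const_mul 2).mul
    hdist)).add (hdist.pow 2)
  rw [mul_zero, zero_pow two_ne_zero, add_zero, add_zero] at hbound
  exact ge_of_tendsto hbound (.of_forall fun k => by
    simpa only [mul_assoc] using asymptoticRadiusSq_le_add hC (zs k) q)

theorem isFixedPt_of_forall_asymptoticRadiusSq_le {T : H → H} (hT : LipschitzWith 1 T)
    (hC : ∀ k, ‖u k‖ ≤ C) (hu : Tendsto (fun k => ‖u k - T (u k)‖) atTop (𝓝 0)) {q : H}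
    (hq : ∀ z, asymptoticRadiusSq u q ≤ asymptoticRadiusSq u z) : IsFixedPt T q := by
  have hmid := asymptoticRadiusSq_midpoint_le hC q (T q)
  have hqmid := hq (midpoint ℝ q (T q))
  have hTq := asymptoticRadiusSq_map_le hT hC hu q
  have hsq : ‖q - T q‖ ^ 2 = 0 := le_antisymm (by linarith) (sq_nonneg _)
  rw [sq_eq_zero_iff, norm_sub_eq_zero_iff] at hsq
  exact hsq.symm

theorem mem_of_forall_asymptoticRadiusSq_le {K : Set H} (hK : Convex ℝ K) (hKc : IsComplete K)
    (huK : ∀ k, u k ∈ K) (hC : ∀ k, ‖u k‖ ≤ C) {q : H}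
    (hq : ∀ z, asymptoticRadiusSq u q ≤ asymptoticRadiusSq u z) : q ∈ K := by
  obtain ⟨v, hvK, hv⟩ := exists_norm_eq_iInf_of_complete_convex ⟨u 0, huK 0⟩ hKc hK q
  have hobtuse := (norm_eq_iInf_iff_real_inner_le_zero hK hvK).1 hv
  have hproj : asymptoticRadiusSq u v ≤ asymptoticRadiusSq u q - ‖q - v‖ ^ 2 := by
    refine le_of_forall_pos_le_add fun ε hε => asymptoticRadiusSq_le_of_eventually_le ?_
    filter_upwards [eventually_sq_norm_sub_le_asymptoticRadiusSq_add hC q hε] with k hk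
    have hexp : u k - q = (u k - v) - (q - v) := by abel
    rw [hexp, norm_sub_sq_real, real_inner_comm] at hk
    linarith [hobtuse (u k) (huK k)]
  have hsq : ‖q - v‖ ^ 2 = 0 := le_antisymm (by linarith [hq v]) (sq_nonneg _)
  rw [sq_eq_zero_iff, norm_sub_eq_zero_iff] at hsq
  rwa [hsq]

theorem exists_isFixedPt_norm_le [CompleteSpace H] {T : H → H} (hT : LipschitzWith 1 T)
    (hC : ∀ k, ‖u k‖ ≤ C) (hu : Tendsto (fun k => ‖u k - T (u k)‖) atTop (𝓝 0)) :
    ∃ q, IsFixedPt T q ∧ ‖q‖ ≤ C := by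
  obtain ⟨q, hq⟩ := exists_forall_asymptoticRadiusSq_le hC
  refine ⟨q, isFixedPt_of_forall_asymptoticRadiusSq_le hT hC hu hq, ?_⟩
  exact mem_closedBall_zero_iff.1 <| mem_of_forall_asymptoticRadiusSq_le (convex_closedBall 0 C)
    Metric.isClosed_closedBall.isComplete (fun k => mem_closedBall_zero_iff.2 (hC k)) hC hq

theorem eventually_lt_sq_norm_of_tendsto_norm_sub_map [CompleteSpace H] {T : H → H}
    (hT : LipschitzWith 1 T) (hu : Tendsto (fun n => ‖u n - T (u n)‖) atTop (𝓝 0)) {r : ℝ}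
    (hr : ∀ q, IsFixedPt T q → r < ‖q‖ ^ 2) : ∀ᶠ n in atTop, r < ‖u n‖ ^ 2 := by
  by_contra hfreq
  obtain ⟨φ, hφ, hφr⟩ := extraction_of_frequently_atTop (not_eventually.1 hfreq)
  have hφC : ∀ k, ‖u (φ k)‖ ≤ √r := fun k => Real.le_sqrt_of_sq_le (not_lt.1 (hφr k))
  obtain ⟨q, hq, hqC⟩ := exists_isFixedPt_norm_le hT hφC (hu.comp hφ.tendsto_atTop)
  have hrq := hr q hq
  nlinarith [Real.sq_sqrt ((sq_nonneg _).trans (not_lt.1 (hφr 0))), norm_nonneg q]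

end AsymptoticCenter

section TikhonovRelaxation

variable {H : Type*} [NormedAddCommGroup H] [InnerProductSpace ℝ H] {T : H → H}
  {β lam : ℕ → ℝ} {x : ℕ → H}

theorem norm_sub_le_max_of_tikhonov (hR : ∀ n, LipschitzWith 1 (relax T (lam n)))
    (hβ : ∀ n, β n ∈ Set.Icc (0 : ℝ) 1) (hx : ∀ n, x (n + 1) = relax T (lam n) (β n • x n))
    {z : H} (hz : IsFixedPt T z) (n : ℕ) : ‖x n - z‖ ≤ max ‖x 0 - z‖ ‖z‖ := by
  induction n with
  | zero => exact le_max_left _ _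
  | succ n ih =>
    obtain ⟨hβ₀, hβ₁⟩ := hβ n
    have hstep := (hR n).norm_sub_le (β n • x n) z
    rw [NNReal.coe_one, one_mul, relax_of_isFixedPt hz, ← hx n] at hstep
    have hsplit : ‖β n • x n - z‖ ≤ β n * ‖x n - z‖ + (1 - β n) * ‖z‖ := by
      rw [show β n • x n - z = β n • (x n - z) - (1 - β n) • z by module]
      refine (norm_sub_le _ _).trans_eq ?_
      rw [norm_smul, norm_smul, Real.norm_of_nonneg hβ₀, Real.norm_of_nonneg (sub_nonneg.2 hβ₁)]
    nlinarith [le_max_right ‖x 0 - z‖ ‖z‖]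

theorem tendsto_norm_succ_sub_of_tikhonov (hR : ∀ n, LipschitzWith 1 (relax T (lam n)))
    (hβ : ∀ n, β n ∈ Set.Icc (0 : ℝ) 1) (hβdiv : ¬ Summable fun n => 1 - β n)
    (hβvar : Summable fun n => |β (n + 1) - β n|)
    (hlamvar : Summable fun n => |lam (n + 1) - lam n|)
    (hx : ∀ n, x (n + 1) = relax T (lam n) (β n • x n)) {M K : ℝ} (hM : ∀ n, ‖x n‖ ≤ M)
    (hK : ∀ n, ‖T (β n • x n) - β n • x n‖ ≤ K) :
    Tendsto (fun n => ‖x (n + 1) - x n‖) atTop (𝓝 0) := by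
  refine tendsto_zero_of_le_one_sub_mul_add_s10 (δ := fun n => 1 - β (n + 1)) (σ := fun _ => 0)
    (ε := fun n => M * |β (n + 1) - β n| + K * |lam (n + 1) - lam n|)
    (fun n => norm_nonneg _) (fun n => ⟨sub_nonneg.2 (hβ _).2, by linarith [(hβ (n + 1)).1]⟩)
    (by rwa [summable_nat_add_iff 1 (f := fun n => 1 - β n)])
    (fun η hη => .of_forall fun _ => hη.le) (fun n => ?_)
    ((hβvar.mul_left M).add (hlamvar.mul_left K)) (fun n => ?_)
  · have hM₀ : 0 ≤ M := (norm_nonneg _).trans (hM 0)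
    have hK₀ : 0 ≤ K := (norm_nonneg _).trans (hK 0)
    positivity
  -- Compare both iterates through `relax T (lam (n + 1)) (β n • x n)`.
  have hsame := (hR (n + 1)).norm_sub_le (β (n + 1) • x (n + 1)) (β n • x n)
  rw [NNReal.coe_one, one_mul, ← hx (n + 1)] at hsame
  have hlam : ‖relax T (lam (n + 1)) (β n • x n) - x (n + 1)‖
      ≤ K * |lam (n + 1) - lam n| := by
    rw [hx n, relax_sub_relax, norm_smul, Real.norm_eq_abs, mul_comm]
    exact mul_le_mul_of_nonneg_right (hK n) (abs_nonneg _)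
  have hy : ‖β (n + 1) • x (n + 1) - β n • x n‖
      ≤ β (n + 1) * ‖x (n + 1) - x n‖ + M * |β (n + 1) - β n| := by
    rw [show β (n + 1) • x (n + 1) - β n • x n
      = β (n + 1) • (x (n + 1) - x n) + (β (n + 1) - β n) • x n by module]
    refine (norm_add_le _ _).trans ?_
    rw [norm_smul, norm_smul, Real.norm_of_nonneg (hβ _).1, Real.norm_eq_abs, mul_comm _ ‖x n‖]
    gcongr
    exact hM n
  have htri := norm_sub_le_norm_sub_add_norm_sub (x (n + 1 + 1))
    (relax T (lam (n + 1)) (β n • x n)) (x (n + 1))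
  simp only [sub_sub_cancel, mul_zero, add_zero]
  linarith

theorem tendsto_norm_sub_map_of_tikhonov (hβ : ∀ n, β n ∈ Set.Icc (0 : ℝ) 1)
    (hβlim : Tendsto β atTop (𝓝 1)) (hlam : ∀ n, 0 < lam n) (hlaminf : 0 < liminf lam atTop)
    (hx : ∀ n, x (n + 1) = relax T (lam n) (β n • x n)) {M : ℝ} (hM : ∀ n, ‖x n‖ ≤ M)
    (hstep : Tendsto (fun n => ‖x (n + 1) - x n‖) atTop (𝓝 0)) :
    Tendsto (fun n => ‖β n • x n - T (β n • x n)‖) atTop (𝓝 0) := by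
  obtain ⟨c, hc, hlamc⟩ : ∃ c, 0 < c ∧ ∀ᶠ n in atTop, c ≤ lam n :=
    ⟨_, half_pos hlaminf, (eventually_lt_of_lt_liminf (half_lt_self hlaminf)
      (isBoundedUnder_of ⟨0, fun n => (hlam n).le⟩)).mono fun _ => le_of_lt⟩
  have hbound : ∀ᶠ n in atTop, ‖β n • x n - T (β n • x n)‖
      ≤ (‖x (n + 1) - x n‖ + (1 - β n) * M) / c := by
    filter_upwards [hlamc] with n hn
    have hdiff : x (n + 1) - β n • x n = lam n • (T (β n • x n) - β n • x n) := by
      rw [hx n, relax]; module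
    have hxy : ‖x n - β n • x n‖ ≤ (1 - β n) * M := by
      rw [show x n - β n • x n = (1 - β n) • x n by module, norm_smul,
        Real.norm_of_nonneg (sub_nonneg.2 (hβ n).2)]
      exact mul_le_mul_of_nonneg_left (hM n) (sub_nonneg.2 (hβ n).2)
    have htri := norm_sub_le_norm_sub_add_norm_sub (x (n + 1)) (x n) (β n • x n)
    rw [hdiff, norm_smul, Real.norm_of_nonneg (hlam n).le] at htri
    rw [le_div_iff₀ hc, norm_sub_rev]
    nlinarith [norm_nonneg (T (β n • x n) - β n • x n)]
  refine squeeze_zero' (.of_forall fun _ => norm_nonneg _) hbound ?_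
  simpa using (hstep.add (((tendsto_const_nhds (x := (1 : ℝ))).sub hβlim).mul_const M)).div_const c

theorem sq_norm_succ_sub_le_of_tikhonov (hR : ∀ n, LipschitzWith 1 (relax T (lam n)))
    (hx : ∀ n, x (n + 1) = relax T (lam n) (β n • x n)) {p : H} (hp : IsFixedPt T p) (n : ℕ) :
    ‖x (n + 1) - p‖ ^ 2
      ≤ β n * ‖x n - p‖ ^ 2 + (1 - β n) * (‖p‖ ^ 2 - β n * ‖x n‖ ^ 2) := by
  have hstep := (hR n).norm_sub_le (β n • x n) p
  rw [NNReal.coe_one, one_mul, relax_of_isFixedPt hp, ← hx n] at hstep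
  have hexp : ‖β n • x n - p‖ ^ 2
      = β n * ‖x n - p‖ ^ 2 + (1 - β n) * ‖p‖ ^ 2 - β n * (1 - β n) * ‖x n‖ ^ 2 := by
    rw [norm_sub_sq_real, norm_sub_sq_real, norm_smul, real_inner_smul_left, Real.norm_eq_abs,
      mul_pow, sq_abs]
    ring
  calc ‖x (n + 1) - p‖ ^ 2 ≤ ‖β n • x n - p‖ ^ 2 := by gcongr
    _ = _ := by rw [hexp]; ring

theorem tendsto_minNormFixedPt_of_tikhonov [CompleteSpace H] (hT : LipschitzWith 1 T)
    (hR : ∀ n, LipschitzWith 1 (relax T (lam n))) (hβ : ∀ n, β n ∈ Set.Icc (0 : ℝ) 1)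
    (hβlim : Tendsto β atTop (𝓝 1)) (hβdiv : ¬ Summable fun n => 1 - β n)
    (hβvar : Summable fun n => |β (n + 1) - β n|) (hlam : ∀ n, 0 < lam n)
    (hlaminf : 0 < liminf lam atTop) (hlamvar : Summable fun n => |lam (n + 1) - lam n|)
    (hx : ∀ n, x (n + 1) = relax T (lam n) (β n • x n)) {p : H} (hp : IsFixedPt T p)
    (hpmin : ∀ q, IsFixedPt T q → ‖p‖ ≤ ‖q‖) : Tendsto x atTop (𝓝 p) := by
  set M := max ‖x 0 - p‖ ‖p‖ + ‖p‖
  have hM : ∀ n, ‖x n‖ ≤ M := fun n => (norm_le_norm_sub_add (x n) p).trans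
    (by linarith [norm_sub_le_max_of_tikhonov hR hβ hx hp n])
  have hy : ∀ n, ‖β n • x n‖ ≤ M := fun n => by
    rw [norm_smul, Real.norm_of_nonneg (hβ n).1]
    exact (mul_le_of_le_one_left (norm_nonneg _) (hβ n).2).trans (hM n)
  have hstep := tendsto_norm_succ_sub_of_tikhonov hR hβ hβdiv hβvar hlamvar hx hM
    (K := 2 * (M + ‖p‖)) fun n => (norm_map_sub_le hT hp _).trans (by linarith [hy n])
  have hres := tendsto_norm_sub_map_of_tikhonov hβ hβlim hlam hlaminf hx hM hstep
  have hσ : ∀ η > 0, ∀ᶠ n in atTop, ‖p‖ ^ 2 - β n * ‖x n‖ ^ 2 ≤ η := fun η hη => by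
    have hfix : ∀ q, IsFixedPt T q → ‖p‖ ^ 2 - η < ‖q‖ ^ 2 := fun q hq => by
      nlinarith [hpmin q hq, norm_nonneg p]
    filter_upwards [eventually_lt_sq_norm_of_tendsto_norm_sub_map hT hres hfix] with n hn
    rw [norm_smul, Real.norm_of_nonneg (hβ n).1, mul_pow] at hn
    have hβsq : β n ^ 2 ≤ β n := by nlinarith [(hβ n).1, (hβ n).2]
    nlinarith [mul_le_mul_of_nonneg_right hβsq (sq_nonneg ‖x n‖)]
  have hsq := tendsto_zero_of_le_one_sub_mul_add_s10 (fun n => sq_nonneg ‖x n - p‖)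
    (fun n => ⟨sub_nonneg.2 (hβ n).2, by linarith [(hβ n).1]⟩) hβdiv hσ (fun _ => le_rfl)
    summable_zero fun n => by simpa using sq_norm_succ_sub_le_of_tikhonov hR hx hp n
  rw [tendsto_iff_norm_sub_tendsto_zero]
  simpa using hsq.sqrt

end TikhonovRelaxation

theorem forwardBackward_tikhonov_strong_convergence_general
    {H : Type*} [NormedAddCommGroup H] [InnerProductSpace ℝ H] [CompleteSpace H]
    (A : H → Set H) (hA : MaximallyMonotoneOp A)
    (βc : ℝ) (hβc : 0 < βc)
    (B : H → H) (hB : ∀ x y : H, βc * ‖B x - B y‖ ^ 2 ≤ ⟪x - y, B x - B y⟫)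
    (γ : ℝ) (hγ : γ ∈ Set.Ioc 0 (2 * βc))
    (J : H → H) (hJ : ∀ x : H, x - J x ∈ γ • A (J x))
    (β lam : ℕ → ℝ)
    (hβ : ∀ n, 0 < β n ∧ β n ≤ 1)
    (hβlim : Tendsto β atTop (nhds 1))
    (hβdiv : ¬ Summable (fun n => 1 - β n))
    (hβvar : Summable (fun n => |β (n + 1) - β n|))
    (hlam : ∀ n, 0 < lam n ∧ lam n ≤ (4 * βc - γ) / (2 * βc))
    (hlaminf : 0 < Filter.liminf lam Filter.atTop)
    (hlamvar : Summable (fun n => |lam (n + 1) - lam n|))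
    (x : ℕ → H)
    (hiter : ∀ n, x (n + 1) =
      (1 - lam n) • (β n • x n) + lam n • J (β n • x n - γ • B (β n • x n)))
    (p : H) (hp : -B p ∈ A p) (hpmin : ∀ q : H, -B q ∈ A q → ‖p‖ ≤ ‖q‖) :
    Tendsto x atTop (nhds p) := by
  obtain ⟨hγ₀, hγ₂⟩ := hγ
  have hR : ∀ t, 0 ≤ t → t ≤ (4 * βc - γ) / (2 * βc) →
      LipschitzWith 1 (relax (fun z => J (z - γ • B z)) t) := fun _ =>
    lipschitzWith_one_relax_forwardBackward hA.1 hβc hB hγ₀.le hJ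
  have hT : LipschitzWith 1 fun z => J (z - γ • B z) := by
    simpa only [relax_one] using hR 1 zero_le_one (by rw [le_div_iff₀ (by positivity)]; linarith)
  have hfix := isFixedPt_forwardBackward_iff (B := B) hA.1 hγ₀ hJ
  exact tendsto_minNormFixedPt_of_tikhonov hT (fun n => hR _ (hlam n).1.le (hlam n).2)
    (fun n => ⟨(hβ n).1.le, (hβ n).2⟩) hβlim hβdiv hβvar (fun n => (hlam n).1) hlaminf hlamvar
    hiter ((hfix p).2 hp) fun q hq => hpmin q ((hfix q).1 hq)

/-- Strong convergence of the forward-backward algorithm with Tikhonov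
regularization terms
`x (n+1) = (1 - λ n) • β n • x n + λ n • J (β n • x n - γ • B (β n • x n))`
to the minimal norm zero of `A + B`, where `A` is maximally monotone, `B` is
`β`-cocoercive, `γ ∈ (0, 2β]` and `J = J_{γA}` is the resolvent of `γ A`,
characterized by `x - J x ∈ γ • A (J x)`.  The set of zeros of `A + B` is
`{x | -B x ∈ A x}` and `p` is its minimal norm element. -/
theorem forwardBackward_tikhonov_strong_convergence
    {H : Type*} [NormedAddCommGroup H] [InnerProductSpace ℝ H] [CompleteSpace H]
    (A : H → Set H) (hA : MaximallyMonotoneOp A)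
    (βc : ℝ) (hβc : 0 < βc)
    (B : H → H) (hB : ∀ x y : H, βc * ‖B x - B y‖ ^ 2 ≤ ⟪x - y, B x - B y⟫)
    (γ : ℝ) (hγ : γ ∈ Set.Ioc 0 (2 * βc))
    (J : H → H) (hJ : ∀ x : H, x - J x ∈ γ • A (J x))
    (hzer_ne : {z : H | -B z ∈ A z}.Nonempty)
    (β lam : ℕ → ℝ)
    (hβ : ∀ n, 0 < β n ∧ β n ≤ 1)
    (hβlim : Tendsto β atTop (nhds 1))
    (hβdiv : ¬ Summable (fun n => 1 - β n))
    (hβvar : Summable (fun n => |β (n + 1) - β n|))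
    (hlam : ∀ n, 0 < lam n ∧ lam n ≤ (4 * βc - γ) / (2 * βc))
    (hlaminf : 0 < Filter.liminf lam Filter.atTop)
    (hlamvar : Summable (fun n => |lam (n + 1) - lam n|))
    (x : ℕ → H)
    (hiter : ∀ n, x (n + 1) =
      (1 - lam n) • (β n • x n) + lam n • J (β n • x n - γ • B (β n • x n)))
    (p : H) (hp : -B p ∈ A p) (hpmin : ∀ q : H, -B q ∈ A q → ‖p‖ ≤ ‖q‖) :
    Tendsto x atTop (nhds p) :=
  forwardBackward_tikhonov_strong_convergence_general A hA βc hβc B hB γ hγ J hJ β lam hβ hβlim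
    hβdiv hβvar hlam hlaminf hlamvar x hiter p hp hpmin
end
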